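/- arXiv:1910.03449 — 4 statements merged into one kernel-verified Lean document; each statement's English description precedes it below -/
import Mathlib

section
/- Let Q₁, Q₂, E₁, E₂ : (-∞, Λ₀) → ℝ be C¹ functions with Λ₀ < 0, satisfying E_i'(Λ) = Λ·Q_i'(Λ) for i = 1,2, and such that |Λ|·|Q₂(Λ) - Q₁(Λ)| → 0 and |E₂(Λ) - E₁(Λ)| → 0 as Λ → -∞. If Q₁(Λ) < Q₂(Λ) for every Λ < Λ₀, then E₁(Λ) > E₂(Λ) for every Λ < Λ₀. -/
/-!
Set `E = E₂ - E₁` and `Q = Q₂ - Q₁`. The relation `E' = Λ Q'` makes `H = E - Λ Q` a primitive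
of `-Q`, so `H` is strictly decreasing where `Q > 0`. The decay hypotheses say `H → 0` as
`Λ → -∞`, hence `H < 0`, i.e. `E < Λ Q`, and the right side is negative for `Λ < 0`.
-/

open Filter Set Topology

theorem StrictAntiOn.lt_of_tendsto_atBot {α β : Type*} [LinearOrder α] [NoMinOrder α]
    [TopologicalSpace β] [Preorder β] [OrderClosedTopology β] {f : α → β} {a : α} {l : β}
    (hf : StrictAntiOn f (Iio a)) (hl : Tendsto f atBot (𝓝 l)) {x : α} (hx : x < a) :
    f x < l := by
  have : Nonempty α := ⟨x⟩
  obtain ⟨y, hyx⟩ := exists_lt x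
  have hya : y < a := hyx.trans hx
  have hfy : f y ≤ l := ge_of_tendsto hl <| by
    filter_upwards [eventually_lt_atBot y] with z hzy
    exact (hf (hzy.trans hya) hya hzy).le
  exact (hf hya hx hyx).trans_le hfy

theorem HasDerivAt.sub_id_mul {E Q : ℝ → ℝ} {q x : ℝ} (hQ : HasDerivAt Q q x)
    (hE : HasDerivAt E (x * q) x) : HasDerivAt (fun t => E t - t * Q t) (-Q x) x :=
  (hE.sub ((hasDerivAt_id' x).mul hQ)).congr_deriv (by ring)

theorem lt_mul_of_hasDerivAt_mul_of_pos {Λ₀ : ℝ} {E Q Q' : ℝ → ℝ}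
    (hQ : ∀ Λ < Λ₀, HasDerivAt Q (Q' Λ) Λ) (hE : ∀ Λ < Λ₀, HasDerivAt E (Λ * Q' Λ) Λ)
    (hQpos : ∀ Λ < Λ₀, 0 < Q Λ) (hQlim : Tendsto (fun Λ => Λ * Q Λ) atBot (𝓝 0))
    (hElim : Tendsto E atBot (𝓝 0)) {Λ : ℝ} (hΛ : Λ < Λ₀) : E Λ < Λ * Q Λ := by
  have hH : ∀ t ∈ Iio Λ₀, HasDerivAt (fun t => E t - t * Q t) (-Q t) t :=
    fun t ht => (hQ t ht).sub_id_mul (hE t ht)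
  have hanti : StrictAntiOn (fun t => E t - t * Q t) (Iio Λ₀) :=
    strictAntiOn_of_hasDerivWithinAt_neg (convex_Iio Λ₀)
      (fun t ht => (hH t ht).continuousAt.continuousWithinAt)
      (fun t ht => (hH t (by simpa using ht)).hasDerivWithinAt)
      (fun t ht => neg_neg_of_pos (hQpos t (by simpa using ht)))
  have := hanti.lt_of_tendsto_atBot (by simpa using hElim.sub hQlim) hΛ
  linarith

theorem stmt_6_general (Λ₀ : ℝ) (hΛ₀ : Λ₀ < 0)
    (Q₁ Q₂ E₁ E₂ Q₁' Q₂' : ℝ → ℝ)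
    (hQ₁ : ∀ Λ < Λ₀, HasDerivAt Q₁ (Q₁' Λ) Λ)
    (hQ₂ : ∀ Λ < Λ₀, HasDerivAt Q₂ (Q₂' Λ) Λ)
    (hE₁ : ∀ Λ < Λ₀, HasDerivAt E₁ (Λ * Q₁' Λ) Λ)
    (hE₂ : ∀ Λ < Λ₀, HasDerivAt E₂ (Λ * Q₂' Λ) Λ)
    (hQlim : Tendsto (fun Λ => |Λ| * |Q₂ Λ - Q₁ Λ|) atBot (nhds 0))
    (hElim : Tendsto (fun Λ => |E₂ Λ - E₁ Λ|) atBot (nhds 0))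
    (hQlt : ∀ Λ < Λ₀, Q₁ Λ < Q₂ Λ) :
    ∀ Λ < Λ₀, E₂ Λ < E₁ Λ := by
  intro Λ hΛ
  have hgap : E₂ Λ - E₁ Λ < Λ * (Q₂ Λ - Q₁ Λ) :=
    lt_mul_of_hasDerivAt_mul_of_pos (E := fun t => E₂ t - E₁ t) (Q := fun t => Q₂ t - Q₁ t)
      (fun t ht => (hQ₂ t ht).sub (hQ₁ t ht))
      (fun t ht => by rw [mul_sub]; exact (hE₂ t ht).sub (hE₁ t ht))
      (fun t ht => sub_pos.mpr (hQlt t ht))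
      (tendsto_zero_iff_abs_tendsto_zero _ |>.mpr <| by
        simpa only [Function.comp_def, abs_mul] using hQlim)
      (tendsto_zero_iff_abs_tendsto_zero _ |>.mpr hElim) hΛ
  have hneg : Λ * (Q₂ Λ - Q₁ Λ) < 0 :=
    mul_neg_of_neg_of_pos (hΛ.trans hΛ₀) (sub_pos.mpr (hQlt Λ hΛ))
  linarith

/-- Comparison lemma: if two C¹ branches satisfy `Eᵢ' = Λ·Qᵢ'`, the mass and energy
differences vanish (suitably weighted) as `Λ → -∞`, and `Q₁ < Q₂` on `(-∞, Λ₀)`,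
then `E₁ > E₂` on `(-∞, Λ₀)`. -/
theorem stmt_6 (Λ₀ : ℝ) (hΛ₀ : Λ₀ < 0)
    (Q₁ Q₂ E₁ E₂ Q₁' Q₂' : ℝ → ℝ)
    (hQ₁ : ∀ Λ < Λ₀, HasDerivAt Q₁ (Q₁' Λ) Λ)
    (hQ₂ : ∀ Λ < Λ₀, HasDerivAt Q₂ (Q₂' Λ) Λ)
    (hQ₁c : ContinuousOn Q₁' (Set.Iio Λ₀))
    (hQ₂c : ContinuousOn Q₂' (Set.Iio Λ₀))
    (hE₁ : ∀ Λ < Λ₀, HasDerivAt E₁ (Λ * Q₁' Λ) Λ)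
    (hE₂ : ∀ Λ < Λ₀, HasDerivAt E₂ (Λ * Q₂' Λ) Λ)
    (hQlim : Tendsto (fun Λ => |Λ| * |Q₂ Λ - Q₁ Λ|) atBot (nhds 0))
    (hElim : Tendsto (fun Λ => |E₂ Λ - E₁ Λ|) atBot (nhds 0))
    (hQlt : ∀ Λ < Λ₀, Q₁ Λ < Q₂ Λ) :
    ∀ Λ < Λ₀, E₂ Λ < E₁ Λ :=
  stmt_6_general Λ₀ hΛ₀ Q₁ Q₂ E₁ E₂ Q₁' Q₂' hQ₁ hQ₂ hE₁ hE₂ hQlim hElim hQlt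
end

section
/- Let Q₁, Q₂, E₁, E₂ : (-∞, Λ₀) → ℝ be C¹ with Λ₀ < 0, satisfying E_i' = Λ·Q_i', with |Λ|·|Q₂(Λ)-Q₁(Λ)| → 0 and |E₂(Λ)-E₁(Λ)| → 0 as Λ → -∞, and Q₁ < Q₂ pointwise on (-∞,Λ₀). Assume additionally that Q₁ and Q₂ are strictly decreasing on (-∞,Λ₀). If Λ₁, Λ₂ ∈ (-∞,Λ₀) satisfy Q₁(Λ₁) = Q₂(Λ₂) = q, then E₁(Λ₁) > E₂(Λ₂). -/
open Filter

/-- Comparison lemma, second form: with `Q₁, Q₂` additionally strictly decreasing,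
equal masses `Q₁(Λ₁) = Q₂(Λ₂) = q` imply `E₁(Λ₁) > E₂(Λ₂)`. -/
theorem stmt_7 (Λ₀ : ℝ) (hΛ₀ : Λ₀ < 0)
    (Q₁ Q₂ E₁ E₂ Q₁' Q₂' : ℝ → ℝ)
    (hQ₁ : ∀ Λ < Λ₀, HasDerivAt Q₁ (Q₁' Λ) Λ)
    (hQ₂ : ∀ Λ < Λ₀, HasDerivAt Q₂ (Q₂' Λ) Λ)
    (hQ₁c : ContinuousOn Q₁' (Set.Iio Λ₀))
    (hQ₂c : ContinuousOn Q₂' (Set.Iio Λ₀))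
    (hE₁ : ∀ Λ < Λ₀, HasDerivAt E₁ (Λ * Q₁' Λ) Λ)
    (hE₂ : ∀ Λ < Λ₀, HasDerivAt E₂ (Λ * Q₂' Λ) Λ)
    (hQlim : Tendsto (fun Λ => |Λ| * |Q₂ Λ - Q₁ Λ|) atBot (nhds 0))
    (hElim : Tendsto (fun Λ => |E₂ Λ - E₁ Λ|) atBot (nhds 0))
    (hQlt : ∀ Λ < Λ₀, Q₁ Λ < Q₂ Λ)
    (hQ₁anti : StrictAntiOn Q₁ (Set.Iio Λ₀))
    (hQ₂anti : StrictAntiOn Q₂ (Set.Iio Λ₀))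
    (Λ₁ Λ₂ q : ℝ) (hΛ₁ : Λ₁ < Λ₀) (hΛ₂ : Λ₂ < Λ₀)
    (hq₁ : Q₁ Λ₁ = q) (hq₂ : Q₂ Λ₂ = q) :
    E₂ Λ₂ < E₁ Λ₁ := by
  set G : ℝ → ℝ := fun Λ => E₂ Λ - E₁ Λ - Λ * (Q₂ Λ - Q₁ Λ) with hGdef
  have hGderiv : ∀ Λ < Λ₀, HasDerivAt G (-(Q₂ Λ - Q₁ Λ)) Λ := by
    intro Λ hΛ
    have h1 := ((hE₂ Λ hΛ).sub (hE₁ Λ hΛ)).sub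
      ((hasDerivAt_id Λ).mul ((hQ₂ Λ hΛ).sub (hQ₁ Λ hΛ)))
    refine h1.congr_deriv ?_
    simp only [id_eq, Pi.sub_apply]
    ring
  have hGanti : StrictAntiOn G (Set.Iio Λ₀) := by
    apply strictAntiOn_of_deriv_neg (convex_Iio Λ₀)
    · intro x hx
      exact ((hGderiv x hx).continuousAt).continuousWithinAt
    · intro x hx
      rw [interior_Iio] at hx
      rw [(hGderiv x hx).deriv]
      have := hQlt x hx
      linarith
  have hGlim : Tendsto G atBot (nhds 0) := by
    have hb : Tendsto (fun Λ => |E₂ Λ - E₁ Λ| + |Λ| * |Q₂ Λ - Q₁ Λ|) atBot (nhds 0) := by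
      simpa using hElim.add hQlim
    refine squeeze_zero_norm (fun Λ => ?_) hb
    · have h1 : |E₂ Λ - E₁ Λ - Λ * (Q₂ Λ - Q₁ Λ)| ≤ |E₂ Λ - E₁ Λ| + |Λ * (Q₂ Λ - Q₁ Λ)| :=
        abs_sub _ _
      calc ‖G Λ‖ = |E₂ Λ - E₁ Λ - Λ * (Q₂ Λ - Q₁ Λ)| := rfl
        _ ≤ |E₂ Λ - E₁ Λ| + |Λ * (Q₂ Λ - Q₁ Λ)| := h1
        _ = |E₂ Λ - E₁ Λ| + |Λ| * |Q₂ Λ - Q₁ Λ| := by rw [abs_mul]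
  have hGle : ∀ Λ < Λ₀, G Λ ≤ 0 := by
    intro Λ hΛ
    have hev : ∀ᶠ Λ' in atBot, G Λ ≤ G Λ' := by
      filter_upwards [eventually_lt_atBot Λ] with Λ' hΛ'
      exact le_of_lt (hGanti (lt_trans hΛ' hΛ) hΛ hΛ')
    exact ge_of_tendsto hGlim hev
  have hGneg : ∀ Λ < Λ₀, G Λ < 0 := by
    intro Λ hΛ
    have h1 : G Λ < G (Λ - 1) := hGanti (Set.mem_Iio.mpr (by linarith)) hΛ (by linarith)
    have h2 : G (Λ - 1) ≤ 0 := hGle _ (by linarith)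
    linarith
  -- Λ₁ < Λ₂
  have hlt : Λ₁ < Λ₂ := by
    rcases lt_trichotomy Λ₁ Λ₂ with h | h | h
    · exact h
    · exfalso
      have h1 := hQlt Λ₁ hΛ₁
      rw [h] at h1
      have h2 := hq₁
      rw [h] at h2
      linarith [hq₂]
    · exfalso
      have h1 : Q₁ Λ₁ < Q₁ Λ₂ := hQ₁anti hΛ₂ hΛ₁ h
      have h2 : Q₁ Λ₂ < Q₂ Λ₂ := hQlt Λ₂ hΛ₂
      linarith [hq₁, hq₂]
  have hsub : Set.uIcc Λ₁ Λ₂ ⊆ Set.Iio Λ₀ := by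
    rw [Set.uIcc_of_le hlt.le]
    intro x hx
    exact lt_of_le_of_lt hx.2 hΛ₂
  have hQ₂'cont : ContinuousOn (fun Λ => Λ * Q₂' Λ) (Set.uIcc Λ₁ Λ₂) :=
    continuousOn_id.mul (hQ₂c.mono hsub)
  have hQ₂cont : ContinuousOn Q₂ (Set.uIcc Λ₁ Λ₂) := fun x hx =>
    ((hQ₂ x (hsub hx)).continuousAt).continuousWithinAt
  -- FTC for E₂
  have hE2int : ∫ Λ in Λ₁..Λ₂, Λ * Q₂' Λ = E₂ Λ₂ - E₂ Λ₁ :=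
    intervalIntegral.integral_eq_sub_of_hasDerivAt
      (fun x hx => hE₂ x (hsub hx)) (hQ₂'cont.intervalIntegrable)
  -- integration by parts identity via FTC for Λ * Q₂ Λ
  have hpart : ∫ Λ in Λ₁..Λ₂, (Q₂ Λ + Λ * Q₂' Λ) = Λ₂ * Q₂ Λ₂ - Λ₁ * Q₂ Λ₁ := by
    apply intervalIntegral.integral_eq_sub_of_hasDerivAt
    · intro x hx
      have h1 := (hasDerivAt_id x).mul (hQ₂ x (hsub hx))
      refine h1.congr_deriv ?_
      simp only [id_eq]
      ring
    · exact (hQ₂cont.add hQ₂'cont).intervalIntegrable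
  have hsplit : ∫ Λ in Λ₁..Λ₂, (Q₂ Λ + Λ * Q₂' Λ)
      = (∫ Λ in Λ₁..Λ₂, Q₂ Λ) + ∫ Λ in Λ₁..Λ₂, Λ * Q₂' Λ :=
    intervalIntegral.integral_add (hQ₂cont.intervalIntegrable) (hQ₂'cont.intervalIntegrable)
  -- lower bound for ∫ Q₂
  have hmono : (Λ₂ - Λ₁) * q ≤ ∫ Λ in Λ₁..Λ₂, Q₂ Λ := by
    have h1 : ∫ _Λ in Λ₁..Λ₂, q = (Λ₂ - Λ₁) * q := by
      simp [intervalIntegral.integral_const, smul_eq_mul]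
    rw [← h1]
    apply intervalIntegral.integral_mono_on hlt.le intervalIntegrable_const
      (hQ₂cont.intervalIntegrable)
    intro x hx
    rcases eq_or_lt_of_le hx.2 with h | h
    · rw [h, hq₂]
    · have : Q₂ Λ₂ < Q₂ x := hQ₂anti (lt_of_le_of_lt (le_of_lt (hx.2.lt_of_ne (by
        intro hEq; rw [hEq] at h; exact lt_irrefl _ h))) hΛ₂) hΛ₂ h
      linarith [hq₂]
  -- G Λ₁ < 0
  have hG1 : E₂ Λ₁ - E₁ Λ₁ - Λ₁ * (Q₂ Λ₁ - Q₁ Λ₁) < 0 := hGneg Λ₁ hΛ₁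
  -- assemble
  have key : E₂ Λ₂ - E₂ Λ₁ = Λ₂ * Q₂ Λ₂ - Λ₁ * Q₂ Λ₁ - ∫ Λ in Λ₁..Λ₂, Q₂ Λ := by
    rw [← hE2int, ← hpart, hsplit]; ring
  rw [hq₂] at key
  rw [hq₁] at hG1
  linarith
end

section
/- For N₋, N₊ ≥ 2 integers, the pair (a*, x*) with a* = (1/2)·artanh((N₋ - N₊)/(N₊N₋ - 1)) and x* = √((N₋-1)/(N₋+1))·√((N₊-1)/(N₊+1)) solves the system: (1-N₋)e^{-a} + x(1+N₋)e^{a} = 0 and (1-N₊)e^{a} + x(1+N₊)e^{-a} = 0. -/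
/-!
The argument `y` of `artanh` is chosen so that `(1 + y) / (1 - y)` factors as
`((N₋ - 1) / (N₋ + 1)) / ((N₊ - 1) / (N₊ + 1))`, hence `exp (2 a) = u / v` with
`u = √((N₋ - 1) / (N₋ + 1))`, `v = √((N₊ - 1) / (N₊ + 1))` and `x = u v`. Multiplying the
first equation by `exp a`, it says `x exp (2a) = u²`; the second is the first with `a ↦ -a`
and `N₋ ↦ N₊`, i.e. `x exp (-2a) = v²`.
-/

open Real

noncomputable def artanh (y : ℝ) : ℝ := 1 / 2 * Real.log ((1 + y) / (1 - y))

lemma artanh_eq_real_artanh {y : ℝ} (hy : y ∈ Set.Icc (-1) 1) :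
    _root_.artanh y = Real.artanh y :=
  (Real.artanh_eq_half_log hy).symm

section

variable {m p : ℝ}

lemma sub_div_mul_sub_one_mem_Ioo (hm : 1 < m) (hp : 1 < p) :
    (m - p) / (p * m - 1) ∈ Set.Ioo (-1) 1 := by
  have hpm : 0 < p * m - 1 := by nlinarith
  rw [Set.mem_Ioo, lt_div_iff₀ hpm, div_lt_one hpm]
  constructor <;> nlinarith

lemma one_add_div_one_sub_sub_div_mul_sub_one (hm : 1 < m) (hp : 1 < p) :
    (1 + (m - p) / (p * m - 1)) / (1 - (m - p) / (p * m - 1))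
      = (m - 1) / (m + 1) / ((p - 1) / (p + 1)) := by
  have hpm : p * m - 1 ≠ 0 := by nlinarith
  have hnum : p * m - 1 + (m - p) = (m - 1) * (p + 1) := by ring
  have hden : p * m - 1 - (m - p) = (m + 1) * (p - 1) := by ring
  rw [one_add_div hpm, one_sub_div hpm, hnum, hden, div_div_div_cancel_right₀ hpm,
    div_div_div_eq]

lemma exp_artanh_sub_div_mul_sub_one (hm : 1 < m) (hp : 1 < p) :
    exp (_root_.artanh ((m - p) / (p * m - 1)))
      = √((m - 1) / (m + 1)) / √((p - 1) / (p + 1)) := by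
  have hy := sub_div_mul_sub_one_mem_Ioo hm hp
  rw [artanh_eq_real_artanh (Set.Ioo_subset_Icc_self hy), Real.exp_artanh hy,
    one_add_div_one_sub_sub_div_mul_sub_one hm hp,
    sqrt_div (div_pos (by linarith) (by linarith)).le]

end

lemma one_sub_mul_exp_neg_add_mul_exp_eq_zero {m x a : ℝ} (hm : m + 1 ≠ 0)
    (h : x * exp (2 * a) = (m - 1) / (m + 1)) :
    (1 - m) * exp (-a) + x * (1 + m) * exp a = 0 := by
  have hexp : exp a = exp (-a) * exp (2 * a) := by rw [← exp_add]; ring_nf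
  calc (1 - m) * exp (-a) + x * (1 + m) * exp a
      = exp (-a) * ((1 - m) + (m + 1) * (x * exp (2 * a))) := by rw [hexp]; ring
    _ = 0 := by rw [h, mul_div_cancel₀ _ hm]; ring

/-- The pair `(a*, x*)` solves the leading-order matching system for an internal edge
connecting vertices of degrees `N₋ + 1` and `N₊ + 1`. -/
theorem stmt_12 (Nm Np : ℕ) (hNm : 2 ≤ Nm) (hNp : 2 ≤ Np)
    (a x : ℝ)
    (ha : a = 1 / 2 * _root_.artanh (((Nm : ℝ) - (Np : ℝ)) / ((Np : ℝ) * (Nm : ℝ) - 1)))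
    (hx : x = Real.sqrt (((Nm : ℝ) - 1) / ((Nm : ℝ) + 1)) *
      Real.sqrt (((Np : ℝ) - 1) / ((Np : ℝ) + 1))) :
    (1 - (Nm : ℝ)) * Real.exp (-a) + x * (1 + (Nm : ℝ)) * Real.exp a = 0 ∧
    (1 - (Np : ℝ)) * Real.exp a + x * (1 + (Np : ℝ)) * Real.exp (-a) = 0 := by
  have hm : (1 : ℝ) < Nm := Nat.one_lt_cast.mpr hNm
  have hp : (1 : ℝ) < Np := Nat.one_lt_cast.mpr hNp
  have hu : 0 < (Nm - 1 : ℝ) / (Nm + 1) := div_pos (by linarith) (by linarith)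
  have hv : 0 < (Np - 1 : ℝ) / (Np + 1) := div_pos (by linarith) (by linarith)
  have hexp : exp (2 * a) = √((Nm - 1 : ℝ) / (Nm + 1)) / √((Np - 1 : ℝ) / (Np + 1)) := by
    rw [ha, ← exp_artanh_sub_div_mul_sub_one hm hp]
    congr 1
    ring
  have hm_eq : x * exp (2 * a) = (Nm - 1) / (Nm + 1) := by
    rw [hx, hexp]
    field_simp [(sqrt_pos.mpr hv).ne']
    rw [sq_sqrt hu.le]
    field_simp
  have hp_eq : x * exp (2 * -a) = (Np - 1) / (Np + 1) := by
    rw [hx, mul_neg, exp_neg, hexp]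
    field_simp [(sqrt_pos.mpr hu).ne']
    rw [sq_sqrt hv.le]
    field_simp
  refine ⟨one_sub_mul_exp_neg_add_mul_exp_eq_zero (by positivity) hm_eq, ?_⟩
  simpa only [neg_neg] using one_sub_mul_exp_neg_add_mul_exp_eq_zero (by positivity) hp_eq
end

section
/- For integers N₋, N₊ ≥ 2, with a* = (1/2)·artanh((N₋-N₊)/(N₊N₋-1)) and x* = √(((N₋-1)(N₊-1))/((N₋+1)(N₊+1))), one has e^{-2|a*|} = √(((N₊-1)(N₋+1))/((N₋-1)(N₊+1))) > x* whenever N₋ ≥ N₊ (so the solution x* lies strictly inside the allowed region). -/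
/-!
With `y = (N₋ - N₊)/(N₊N₋ - 1)` one has `(1 - y)/(1 + y) = ((N₊ - 1)(N₋ + 1))/((N₋ - 1)(N₊ + 1))`
and `0 ≤ y < 1`, so `a* = artanh y / 2 ≥ 0` and `e^{-2|a*|} = e^{-artanh y} = √((1 - y)/(1 + y))`.
Comparing the squares, `x* < e^{-2|a*|}` reduces to `(N₋ - 1)² < (N₋ + 1)²`.
-/

open Real

lemma artanh_nonneg {y : ℝ} (h0 : 0 ≤ y) (h1 : y < 1) : 0 ≤ _root_.artanh y := by
  have hratio : 1 ≤ (1 + y) / (1 - y) := by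
    rw [le_div_iff₀ (by linarith)]
    linarith
  unfold _root_.artanh
  have := Real.log_nonneg hratio
  positivity

lemma exp_neg_artanh {y : ℝ} (hy : |y| < 1) :
    exp (-_root_.artanh y) = √((1 - y) / (1 + y)) := by
  obtain ⟨hy₀, hy₁⟩ := abs_lt.mp hy
  have hpos : 0 < (1 - y) / (1 + y) := div_pos (by linarith) (by linarith)
  rw [_root_.artanh, ← inv_div (1 - y), Real.log_inv, Real.sqrt_eq_rpow, Real.rpow_def_of_pos hpos]
  ring_nf

lemma one_sub_div_one_add_eq {K : Type*} [Field K] {m p : K} (h : p * m - 1 ≠ 0) :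
    (1 - (m - p) / (p * m - 1)) / (1 + (m - p) / (p * m - 1)) =
      ((p - 1) * (m + 1)) / ((m - 1) * (p + 1)) := by
  rw [← mul_div_mul_right _ _ h, sub_mul, add_mul, div_mul_cancel₀ _ h]
  ring_nf

lemma div_mem_Ico_of_one_lt_of_le {m p : ℝ} (hp : 1 < p) (hpm : p ≤ m) :
    0 ≤ (m - p) / (p * m - 1) ∧ (m - p) / (p * m - 1) < 1 := by
  have hden : 0 < p * m - 1 := by nlinarith
  refine ⟨div_nonneg (by linarith) hden.le, ?_⟩
  rw [div_lt_one hden]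
  nlinarith

/-- For `N₋ ≥ N₊ ≥ 2`, `e^{-2|a*|} = √(((N₊-1)(N₋+1))/((N₋-1)(N₊+1))) > x*`, so the
solution `x*` lies strictly inside the allowed region. -/
theorem stmt_13 (Nm Np : ℕ) (hNp : 2 ≤ Np) (hle : Np ≤ Nm)
    (a x : ℝ)
    (ha : a = 1 / 2 * _root_.artanh (((Nm : ℝ) - (Np : ℝ)) / ((Np : ℝ) * (Nm : ℝ) - 1)))
    (hx : x = Real.sqrt ((((Nm : ℝ) - 1) * ((Np : ℝ) - 1)) /
      (((Nm : ℝ) + 1) * ((Np : ℝ) + 1)))) :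
    Real.exp (-2 * |a|) =
      Real.sqrt ((((Np : ℝ) - 1) * ((Nm : ℝ) + 1)) / (((Nm : ℝ) - 1) * ((Np : ℝ) + 1))) ∧
    x < Real.exp (-2 * |a|) := by
  have hp : (1 : ℝ) < Np := by exact_mod_cast hNp
  have hpm : (Np : ℝ) ≤ Nm := by exact_mod_cast hle
  obtain ⟨hy₀, hy₁⟩ := div_mem_Ico_of_one_lt_of_le hp hpm
  have ha₀ : 0 ≤ a := ha ▸ mul_nonneg (by norm_num) (artanh_nonneg hy₀ hy₁)
  have hexp : exp (-2 * |a|) = √((1 - ((Nm : ℝ) - Np) / ((Np : ℝ) * Nm - 1)) /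
      (1 + ((Nm : ℝ) - Np) / ((Np : ℝ) * Nm - 1))) := by
    rw [← exp_neg_artanh (abs_lt.mpr ⟨by linarith, hy₁⟩), abs_of_nonneg ha₀, ha]
    ring_nf
  rw [hexp, one_sub_div_one_add_eq (by nlinarith)]
  have hm₀ : (0 : ℝ) < Nm - 1 := by linarith
  have hp₀ : (0 : ℝ) < Np - 1 := by linarith
  refine ⟨rfl, hx ▸ Real.sqrt_lt_sqrt (by positivity) ?_⟩
  rw [div_lt_div_iff₀ (by positivity) (by positivity)]
  nlinarith [mul_pos hm₀ hp₀, mul_pos (mul_pos hm₀ hp₀) hp₀]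
end
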